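/- For α real, let B^α be the space of locally L² functions v on ℝ³ with norm ‖1_{B(0,1)} v‖₂ + Σ_{k≥0} 2^{αk} ‖1_{A_k} v‖₂ where A_k = {2^k ≤ |x| ≤ 2^{k+1}}. Then for 0 < θ < 1 and p = 2/(1+θ), every v ∈ B^{3θ/2} belongs to the Lorentz space L^{p,1}(ℝ³), with ‖v‖_{L^{p,1}} ≲ ‖v‖_{B^{3θ/2}}. -/

import Mathlib

open MeasureTheory Filter
open scoped ENNReal NNReal

noncomputable section

variable {α : Type*} [MeasurableSpace α]

/-- Nonincreasing rearrangement of `f` with respect to the measure `μ`. -/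
def rearr (μ : Measure α) (f : α → ℂ) (t : ℝ) : ℝ≥0∞ :=
  sInf {s : ℝ≥0∞ | μ {x | s < (‖f x‖₊ : ℝ≥0∞)} ≤ ENNReal.ofReal t}

/-- Lorentz quasinorm `L^{p,q}` with respect to the measure `μ`. -/
def lorentzNorm (μ : Measure α) (p : ℝ) (q : ℝ≥0∞) (f : α → ℂ) : ℝ≥0∞ :=
  if q = ∞ then ⨆ (t : ℝ) (_ : 0 < t), ENNReal.ofReal (t ^ (1 / p)) * rearr μ f t
  else (∫⁻ t in Set.Ioi (0 : ℝ),
      (ENNReal.ofReal (t ^ (1 / p)) * rearr μ f t) ^ q.toReal * (ENNReal.ofReal t)⁻¹) ^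
      (1 / q.toReal)

abbrev E3 := EuclideanSpace ℝ (Fin 3)

/-- The dyadic annulus `A_k = {2^k ≤ |x| ≤ 2^{k+1}}` in `ℝ³`. -/
def annulus (k : ℕ) : Set E3 := {x : E3 | 2 ^ (k : ℝ) ≤ ‖x‖ ∧ ‖x‖ ≤ 2 ^ ((k : ℝ) + 1)}

/-- The norm of the space `B^α` in `ℝ³`:
`‖1_{B(0,1)} v‖₂ + Σ_{k ≥ 0} 2^{αk} ‖1_{A_k} v‖₂`. -/
def Bnorm (α' : ℝ) (v : E3 → ℂ) : ℝ≥0∞ :=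
  eLpNorm ((Metric.ball (0 : E3) 1).indicator v) 2 volume +
    ∑' k : ℕ, ENNReal.ofReal (2 ^ (α' * k)) * eLpNorm ((annulus k).indicator v) 2 volume

/-!
With `a = 1 / p = (1 + θ) / 2`, Fubini turns the `L^{p,1}` norm into `p ∫₀^∞ d_v(l) ^ a dl`,
where `d_v` is the distribution function of `v`. Since `a ≤ 1`, `x ↦ x ^ a` is subadditive,
so this integral is at most the sum of the same integrals for the restrictions of `v` to the
unit ball and to the dyadic annuli. For a function supported on a set of measure `m` with
`L²` norm `N`, the bounds `d ≤ m` and (Chebyshev) `d(l) ≤ N² / l²` give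
`∫ d ^ a ≲ m ^ (a - 1/2) N` because `2a > 1`; on `A_k` the factor
`|A_k| ^ (θ / 2) ≲ 2 ^ (3θk/2)` is exactly the weight of the `B^{3θ/2}` norm.
-/

open Set

section Rearrangement

variable {E : Type*} [ENorm E]

def distribution (μ : Measure α) (f : α → E) (s : ℝ≥0∞) : ℝ≥0∞ :=
  μ {x | s < ‖f x‖ₑ}

lemma distribution_antitone {μ : Measure α} {f : α → E} :
    Antitone (distribution μ f) :=
  fun _ _ hst => measure_mono fun _ hx => lt_of_le_of_lt hst hx

lemma measurable_distribution_ofReal_rpow {a : ℝ} (ha : 0 ≤ a) (μ : Measure α) (f : α → E) :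
    Measurable fun l : ℝ => distribution μ f (ENNReal.ofReal l) ^ a :=
  Antitone.measurable fun _ _ h =>
    ENNReal.rpow_le_rpow (distribution_antitone (ENNReal.ofReal_le_ofReal h)) ha

variable {μ : Measure α} {f : α → ℂ} {t : ℝ} {s : ℝ≥0∞}

lemma distribution_rearr_le : distribution μ f (rearr μ f t) ≤ ENNReal.ofReal t := by
  set r := rearr μ f t
  rcases (le_top : r ≤ ⊤).eq_or_lt with hr | hr
  · simp [distribution, hr]
  obtain ⟨u, hu_anti, hu_mem, hu⟩ := exists_seq_strictAnti_tendsto' hr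
  have hcover : {x | r < ‖f x‖ₑ} ⊆ ⋃ n, {x | u n < ‖f x‖ₑ} := fun x hx =>
    mem_iUnion.2 (((tendsto_order.1 hu).2 _ hx).exists)
  calc distribution μ f r ≤ μ (⋃ n, {x | u n < ‖f x‖ₑ}) := measure_mono hcover
    _ = ⨆ n, distribution μ f (u n) :=
      Monotone.measure_iUnion fun m n hmn x hx => (hu_anti.antitone hmn).trans_lt hx
    _ ≤ ENNReal.ofReal t := iSup_le fun n => by
      obtain ⟨s, hs, hsu⟩ := sInf_lt_iff.1 (hu_mem n).1
      exact (distribution_antitone hsu.le).trans hs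

lemma rearr_le_iff : rearr μ f t ≤ s ↔ distribution μ f s ≤ ENNReal.ofReal t :=
  ⟨fun h => (distribution_antitone h).trans distribution_rearr_le, fun h => sInf_le h⟩

lemma lt_rearr_iff : s < rearr μ f t ↔ ENNReal.ofReal t < distribution μ f s := by
  simpa only [not_le] using rearr_le_iff.not

lemma rearr_antitone : Antitone (rearr μ f) :=
  fun _ _ h => sInf_le_sInf fun _ hs => hs.trans (ENNReal.ofReal_le_ofReal h)

end Rearrangement

lemma lorentzNorm_one_eq (μ : Measure α) (p : ℝ) (f : α → ℂ) :
    lorentzNorm μ p 1 f = ∫⁻ t in Ioi 0, ENNReal.ofReal (t ^ (1 / p - 1)) * rearr μ f t := by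
  simp only [lorentzNorm, ENNReal.one_ne_top, if_false, ENNReal.toReal_one, ENNReal.rpow_one,
    div_one]
  refine setLIntegral_congr_fun measurableSet_Ioi fun t (ht : 0 < t) => ?_
  rw [mul_right_comm, ← ENNReal.ofReal_inv_of_pos ht,
    ← ENNReal.ofReal_mul (Real.rpow_nonneg ht.le _), Real.rpow_sub_one ht.ne',
    div_eq_mul_inv (t ^ (1 / p))]

lemma lintegral_Ioi_one_ofReal_rpow_eq_top {s : ℝ} (hs : -1 ≤ s) :
    ∫⁻ t in Ioi 1, ENNReal.ofReal (t ^ s) = ⊤ := by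
  by_contra h
  have h_not_int : ¬ IntegrableOn (fun t : ℝ => t ^ s) (Ioi 1) := by
    rw [integrableOn_Ioi_rpow_iff one_pos]; linarith
  refine h_not_int ⟨(continuousOn_id.rpow_const fun t (ht : 1 < t) => Or.inl
    (by positivity)).aestronglyMeasurable measurableSet_Ioi, ?_⟩
  exact (hasFiniteIntegral_iff_ofReal <| (ae_restrict_iff' measurableSet_Ioi).2 <|
    ae_of_all _ fun t (ht : 1 < t) => by positivity).2 (lt_top_iff_ne_top.2 h)

lemma setLIntegral_rpow_sub_one_ofReal_lt {a : ℝ} (ha : 0 < a) (c : ℝ≥0∞) :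
    ∫⁻ t in {t | ENNReal.ofReal t < c} ∩ Ioi 0, ENNReal.ofReal (t ^ (a - 1)) =
      ENNReal.ofReal a⁻¹ * c ^ a := by
  rcases eq_or_ne c ⊤ with rfl | hc
  · have h_top := lintegral_Ioi_one_ofReal_rpow_eq_top (s := a - 1) (by linarith)
    simp only [ENNReal.ofReal_lt_top, ofPred_true, univ_inter, ENNReal.top_rpow_of_pos ha,
      ENNReal.mul_top (ENNReal.ofReal_pos.2 (inv_pos.2 ha)).ne']
    exact top_le_iff.1 (h_top ▸ lintegral_mono_set (Ioi_subset_Ioi zero_le_one))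
  have hset : {t | ENNReal.ofReal t < c} ∩ Ioi 0 = Ioo 0 c.toReal := by
    ext t
    simp only [mem_inter_iff, mem_Ioi, mem_ofPred_eq, mem_Ioo]
    exact ⟨fun ⟨h, ht⟩ => ⟨ht, (ENNReal.ofReal_lt_iff_lt_toReal ht.le hc).1 h⟩,
      fun ⟨ht, h⟩ => ⟨(ENNReal.ofReal_lt_iff_lt_toReal ht.le hc).2 h, ht⟩⟩
  have hc0 : 0 ≤ c.toReal := ENNReal.toReal_nonneg
  have h_int : IntegrableOn (fun t : ℝ => t ^ (a - 1)) (Ioo 0 c.toReal) :=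
    ((intervalIntegrable_iff_integrableOn_Ioc_of_le hc0).1
      (intervalIntegral.intervalIntegrable_rpow' (by linarith))).mono_set Ioo_subset_Ioc_self
  have h_nonneg : 0 ≤ᵐ[volume.restrict (Ioo 0 c.toReal)] fun t : ℝ => t ^ (a - 1) :=
    (ae_restrict_iff' measurableSet_Ioo).2 (ae_of_all _ fun t ht => Real.rpow_nonneg ht.1.le _)
  rw [hset, ← ofReal_integral_eq_lintegral_ofReal h_int h_nonneg, ← integral_Ioc_eq_integral_Ioo,
    ← intervalIntegral.integral_of_le hc0, integral_rpow (Or.inl (by linarith)), sub_add_cancel,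
    Real.zero_rpow ha.ne', sub_zero, div_eq_inv_mul, ENNReal.ofReal_mul (inv_nonneg.2 ha.le),
    ← ENNReal.ofReal_rpow_of_nonneg hc0 ha.le, ENNReal.ofReal_toReal hc]

lemma volume_Ioi_inter_ofReal_lt (c : ℝ≥0∞) :
    volume ({t : ℝ | ENNReal.ofReal t < c} ∩ Ioi 0) = c := by
  simpa using setLIntegral_rpow_sub_one_ofReal_lt one_pos c

theorem lintegral_rpow_mul_rearr {a : ℝ} (ha : 0 < a) (μ : Measure α) (f : α → ℂ) :
    ∫⁻ t in Ioi 0, ENNReal.ofReal (t ^ (a - 1)) * rearr μ f t =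
      ENNReal.ofReal a⁻¹ * ∫⁻ l in Ioi 0, distribution μ f (ENNReal.ofReal l) ^ a := by
  set S : Set (ℝ × ℝ) := {p | ENNReal.ofReal p.2 < rearr μ f p.1}
  have hS : MeasurableSet S := measurableSet_lt (ENNReal.measurable_ofReal.comp measurable_snd)
    (rearr_antitone.measurable.comp measurable_fst)
  set G : ℝ → ℝ → ℝ≥0∞ := fun t l => S.indicator (fun p => ENNReal.ofReal (p.1 ^ (a - 1))) (t, l)
  have hG : Measurable (Function.uncurry G) :=
    (ENNReal.measurable_ofReal.comp (measurable_fst.pow_const _)).indicator hS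
  have h_inner_l (t : ℝ) : ∫⁻ l in Ioi 0, G t l = ENNReal.ofReal (t ^ (a - 1)) * rearr μ f t := by
    have : G t = {l | ENNReal.ofReal l < rearr μ f t}.indicator
        fun _ => ENNReal.ofReal (t ^ (a - 1)) := by
      ext l; simp only [G, S, indicator_apply, mem_ofPred_eq]
    rw [this, setLIntegral_indicator (measurableSet_lt ENNReal.measurable_ofReal measurable_const),
      setLIntegral_const, volume_Ioi_inter_ofReal_lt]
  have h_inner_t (l : ℝ) : ∫⁻ t in Ioi 0, G t l =
      ENNReal.ofReal a⁻¹ * distribution μ f (ENNReal.ofReal l) ^ a := by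
    have : (G · l) = {t | ENNReal.ofReal t < distribution μ f (ENNReal.ofReal l)}.indicator
        fun t => ENNReal.ofReal (t ^ (a - 1)) := by
      ext t; simp only [G, S, indicator_apply, mem_ofPred_eq, lt_rearr_iff]
    rw [this, setLIntegral_indicator (measurableSet_lt ENNReal.measurable_ofReal measurable_const),
      setLIntegral_rpow_sub_one_ofReal_lt ha]
  calc ∫⁻ t in Ioi 0, ENNReal.ofReal (t ^ (a - 1)) * rearr μ f t
      = ∫⁻ t in Ioi 0, ∫⁻ l in Ioi 0, G t l := by simp only [h_inner_l]
    _ = ∫⁻ l in Ioi 0, ∫⁻ t in Ioi 0, G t l := lintegral_lintegral_swap hG.aemeasurable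
    _ = ENNReal.ofReal a⁻¹ * ∫⁻ l in Ioi 0, distribution μ f (ENNReal.ofReal l) ^ a := by
      simp only [h_inner_t, lintegral_const_mul' _ _ ENNReal.ofReal_ne_top]

theorem lorentzNorm_one_eq_lintegral_distribution {p : ℝ} (hp : 0 < p) (μ : Measure α)
    (f : α → ℂ) :
    lorentzNorm μ p 1 f =
      ENNReal.ofReal p * ∫⁻ l in Ioi 0, distribution μ f (ENNReal.ofReal l) ^ (1 / p) := by
  rw [lorentzNorm_one_eq, lintegral_rpow_mul_rearr (by positivity), ← one_div, one_div_one_div]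

theorem ENNReal.rpow_tsum_le {ι : Type*} {a : ℝ} (ha0 : 0 < a) (ha1 : a ≤ 1) (g : ι → ℝ≥0∞) :
    (∑' i, g i) ^ a ≤ ∑' i, g i ^ a :=
  le_of_tendsto' (((ENNReal.continuous_rpow_const).tendsto _).comp ENNReal.summable.hasSum)
    fun s => (Finset.le_sum_of_subadditive (· ^ a) (ENNReal.zero_rpow_of_pos ha0).le
      (fun x y => ENNReal.rpow_add_le_add_rpow x y ha0.le ha1) s g).trans (ENNReal.sum_le_tsum s)

section Decomposition

variable {E : Type*} [NormedAddCommGroup E] {μ : Measure α}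

lemma distribution_le_add_tsum_indicator {ι : Type*} [Countable ι] {S₀ : Set α} {S : ι → Set α}
    (hS : S₀ ∪ ⋃ i, S i = univ) (f : α → E) (s : ℝ≥0∞) :
    distribution μ f s ≤
      distribution μ (S₀.indicator f) s + ∑' i, distribution μ ((S i).indicator f) s := by
  have hcover : {x | s < ‖f x‖ₑ} ⊆
      {x | s < ‖S₀.indicator f x‖ₑ} ∪ ⋃ i, {x | s < ‖(S i).indicator f x‖ₑ} := by
    intro x hx
    rcases (hS ▸ mem_univ x : x ∈ S₀ ∪ ⋃ i, S i) with h | h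
    · exact Or.inl (by rwa [mem_ofPred_eq, indicator_of_mem h])
    · obtain ⟨i, hi⟩ := mem_iUnion.1 h
      exact Or.inr (mem_iUnion.2 ⟨i, by rwa [mem_ofPred_eq, indicator_of_mem hi]⟩)
  exact (measure_mono hcover).trans
    ((measure_union_le _ _).trans (add_le_add le_rfl (measure_iUnion_le _)))

lemma lintegral_distribution_rpow_le_add_tsum {ι : Type*} [Countable ι] {a : ℝ} (ha0 : 0 < a)
    (ha1 : a ≤ 1) {S₀ : Set α} {S : ι → Set α} (hS : S₀ ∪ ⋃ i, S i = univ) (f : α → E) :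
    ∫⁻ l in Ioi 0, distribution μ f (ENNReal.ofReal l) ^ a ≤
      (∫⁻ l in Ioi 0, distribution μ (S₀.indicator f) (ENNReal.ofReal l) ^ a) +
        ∑' i, ∫⁻ l in Ioi 0, distribution μ ((S i).indicator f) (ENNReal.ofReal l) ^ a := by
  calc ∫⁻ l in Ioi 0, distribution μ f (ENNReal.ofReal l) ^ a
      ≤ ∫⁻ l in Ioi 0, (distribution μ (S₀.indicator f) (ENNReal.ofReal l) ^ a +
          ∑' i, distribution μ ((S i).indicator f) (ENNReal.ofReal l) ^ a) := by
        refine lintegral_mono fun l => ?_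
        grw [distribution_le_add_tsum_indicator hS f, ENNReal.rpow_add_le_add_rpow _ _ ha0.le ha1,
          ENNReal.rpow_tsum_le ha0 ha1]
    _ = _ := by
      rw [lintegral_add_left (measurable_distribution_ofReal_rpow ha0.le μ _),
        lintegral_tsum fun i => (measurable_distribution_ofReal_rpow ha0.le μ _).aemeasurable]

end Decomposition

lemma lintegral_Ioi_rpow_le_of_le_min {φ : ℝ → ℝ≥0∞} {a p m N : ℝ} (hp : 0 < p)
    (hap : 1 < a * p) (hm : 0 < m) (hN : 0 < N) (h_le_m : ∀ l, φ l ≤ ENNReal.ofReal m)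
    (h_le_N : ∀ l, 0 < l → φ l ≤ ENNReal.ofReal (N ^ p * l ^ (-p))) :
    ∫⁻ l in Ioi 0, φ l ^ a ≤ ENNReal.ofReal ((1 + (a * p - 1)⁻¹) * (m ^ (a - 1 / p) * N)) := by
  have ha : 0 < a := pos_of_mul_pos_left (one_pos.trans hap) hp.le
  -- `T` balances the two bounds: `m = N ^ p * T ^ (-p)`.
  set T := N * m ^ (-1 / p)
  have hT : 0 < T := by positivity
  have h_small : ∫⁻ l in Ioc 0 T, φ l ^ a ≤ ENNReal.ofReal (m ^ (a - 1 / p) * N) := by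
    calc ∫⁻ l in Ioc 0 T, φ l ^ a ≤ ∫⁻ _ in Ioc 0 T, ENNReal.ofReal (m ^ a) :=
          lintegral_mono fun l => (ENNReal.rpow_le_rpow (h_le_m l) ha.le).trans_eq
            (ENNReal.ofReal_rpow_of_pos hm)
      _ = ENNReal.ofReal (m ^ a * T) := by
          rw [setLIntegral_const, Real.volume_Ioc, sub_zero, ← ENNReal.ofReal_mul (by positivity)]
      _ = ENNReal.ofReal (m ^ (a - 1 / p) * N) := by
          rw [mul_left_comm, ← Real.rpow_add hm, mul_comm, neg_div, ← sub_eq_add_neg]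
  have h_large : ∫⁻ l in Ioi T, φ l ^ a ≤
      ENNReal.ofReal ((a * p - 1)⁻¹ * (m ^ (a - 1 / p) * N)) := by
    have h_int : IntegrableOn (fun l : ℝ => N ^ (a * p) * l ^ (-(a * p))) (Ioi T) :=
      (integrableOn_Ioi_rpow_of_lt (by linarith) hT).const_mul _
    calc ∫⁻ l in Ioi T, φ l ^ a
        ≤ ∫⁻ l in Ioi T, ENNReal.ofReal (N ^ (a * p) * l ^ (-(a * p))) := by
          refine setLIntegral_mono' measurableSet_Ioi fun l (hl : T < l) => ?_
          have hl0 : 0 < l := hT.trans hl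
          refine (ENNReal.rpow_le_rpow (h_le_N l hl0) ha.le).trans_eq ?_
          rw [ENNReal.ofReal_rpow_of_nonneg (by positivity) ha.le, Real.mul_rpow (by positivity)
            (by positivity), ← Real.rpow_mul hN.le, ← Real.rpow_mul hl0.le, neg_mul,
            mul_comm p a]
      _ = ENNReal.ofReal (N ^ (a * p) * (T ^ (1 - a * p) / (a * p - 1))) := by
          rw [← ofReal_integral_eq_lintegral_ofReal h_int ((ae_restrict_iff' measurableSet_Ioi).2
            (ae_of_all _ fun l (hl : T < l) => by have := hT.trans hl; positivity)),
            integral_const_mul, integral_Ioi_rpow_of_lt (by linarith) hT]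
          rw [neg_add_eq_sub, neg_div, ← div_neg, neg_sub]
      _ = ENNReal.ofReal ((a * p - 1)⁻¹ * (m ^ (a - 1 / p) * N)) := by
          congr 1
          rw [Real.mul_rpow hN.le (by positivity), ← Real.rpow_mul hm.le,
            show -1 / p * (1 - a * p) = a - 1 / p by field_simp; ring]
          rw [mul_div_assoc', div_eq_inv_mul, mul_left_comm (N ^ _), ← mul_assoc (N ^ _),
            ← Real.rpow_add hN, sub_add_cancel, Real.rpow_one, mul_comm N]
  rw [← Ioc_union_Ioi_eq_Ioi hT.le, lintegral_union measurableSet_Ioi Ioc_disjoint_Ioi_same]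
  refine (add_le_add h_small h_large).trans_eq ?_
  rw [← ENNReal.ofReal_add (by positivity) (by positivity), add_mul, one_mul]

section SupportBound

variable {E : Type*} [NormedAddCommGroup E] {μ : Measure α}

lemma distribution_le_measure_of_support_subset {S : Set α} {w : α → E}
    (hwS : Function.support w ⊆ S) (s : ℝ≥0∞) : distribution μ w s ≤ μ S :=
  measure_mono fun x (hx : s < ‖w x‖ₑ) => hwS (enorm_ne_zero.1 (ne_bot_of_gt hx))

lemma distribution_le_eLpNorm {p : ℝ≥0∞} (hp0 : p ≠ 0) (hp : p ≠ ⊤) {w : α → E}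
    (hw : AEStronglyMeasurable w μ) {s : ℝ≥0∞} (hs : s ≠ 0) :
    distribution μ w s ≤ s⁻¹ ^ p.toReal * eLpNorm w p μ ^ p.toReal :=
  (measure_mono fun x (hx : s < ‖w x‖ₑ) => hx.le).trans
    (meas_ge_le_mul_pow_eLpNorm_enorm μ hp0 hp hw hs (by simp))

theorem lintegral_distribution_rpow_le {p : ℝ≥0∞} (hp0 : p ≠ 0) (hp : p ≠ ⊤) {a : ℝ}
    (hap : 1 < a * p.toReal) {S : Set α} {w : α → E} (hw : AEStronglyMeasurable w μ)
    (hwS : Function.support w ⊆ S) :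
    ∫⁻ l in Ioi 0, distribution μ w (ENNReal.ofReal l) ^ a ≤
      ENNReal.ofReal (1 + (a * p.toReal - 1)⁻¹) * (μ S ^ (a - 1 / p.toReal) * eLpNorm w p μ) := by
  have hp' : 0 < p.toReal := ENNReal.toReal_pos hp0 hp
  have ha : 0 < a := pos_of_mul_pos_left (one_pos.trans hap) hp'.le
  have hb : 0 < a - 1 / p.toReal := by
    rw [sub_pos, div_lt_iff₀ hp']; exact hap
  have hC : ENNReal.ofReal (1 + (a * p.toReal - 1)⁻¹) ≠ 0 := by
    have : 0 < a * p.toReal - 1 := by linarith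
    exact (ENNReal.ofReal_pos.2 (by positivity)).ne'
  have h_zero (h : ∀ l : ℝ, 0 < l → distribution μ w (ENNReal.ofReal l) = 0) :
      ∫⁻ l in Ioi 0, distribution μ w (ENNReal.ofReal l) ^ a = 0 := by
    refine (setLIntegral_congr_fun measurableSet_Ioi fun l (hl : 0 < l) => ?_).trans lintegral_zero
    simp [h l hl, ha]
  rcases eq_or_ne (μ S) 0 with hm0 | hm0
  · exact (h_zero fun l _ => nonpos_iff_eq_zero.1
      ((distribution_le_measure_of_support_subset hwS _).trans hm0.le)).trans_le bot_le
  rcases eq_or_ne (eLpNorm w p μ) 0 with hN0 | hN0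
  · exact (h_zero fun l hl => nonpos_iff_eq_zero.1
      ((distribution_le_eLpNorm hp0 hp hw (ENNReal.ofReal_pos.2 hl).ne').trans_eq
        (by simp [hN0, hp']))).trans_le bot_le
  rcases eq_or_ne (μ S) ⊤ with hm_top | hm_top
  · rw [hm_top, ENNReal.top_rpow_of_pos hb, ENNReal.top_mul hN0, ENNReal.mul_top hC]
    exact le_top
  rcases eq_or_ne (eLpNorm w p μ) ⊤ with hN_top | hN_top
  · rw [hN_top, ENNReal.mul_top (ENNReal.rpow_pos (pos_iff_ne_zero.2 hm0) hm_top).ne',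
      ENNReal.mul_top hC]
    exact le_top
  have hm : 0 < (μ S).toReal := ENNReal.toReal_pos hm0 hm_top
  have hN : 0 < (eLpNorm w p μ).toReal := ENNReal.toReal_pos hN0 hN_top
  refine (lintegral_Ioi_rpow_le_of_le_min hp' hap hm hN (fun l => ?_) fun l hl => ?_).trans_eq ?_
  · rw [ENNReal.ofReal_toReal hm_top]
    exact distribution_le_measure_of_support_subset hwS _
  · refine (distribution_le_eLpNorm hp0 hp hw (ENNReal.ofReal_pos.2 hl).ne').trans_eq ?_
    rw [ENNReal.ofReal_mul (by positivity), ← ENNReal.ofReal_rpow_of_pos hN,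
      ENNReal.ofReal_toReal hN_top, ← ENNReal.ofReal_rpow_of_pos hl, ENNReal.rpow_neg,
      ENNReal.inv_rpow, mul_comm]
  · rw [ENNReal.ofReal_mul (by positivity), ENNReal.ofReal_mul (by positivity),
      ← ENNReal.ofReal_rpow_of_pos hm, ENNReal.ofReal_toReal hm_top, ENNReal.ofReal_toReal hN_top]

end SupportBound

lemma measurableSet_annulus (k : ℕ) : MeasurableSet (annulus k) :=
  measurable_norm measurableSet_Icc

lemma ball_union_iUnion_annulus : Metric.ball (0 : E3) 1 ∪ ⋃ k, annulus k = univ := by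
  refine eq_univ_of_forall fun x => ?_
  rcases lt_or_ge ‖x‖ 1 with hx | hx
  · exact Or.inl (mem_ball_zero_iff.2 hx)
  have h_log : (2 : ℝ) ^ Real.logb 2 ‖x‖ = ‖x‖ :=
    Real.rpow_logb two_pos (by norm_num) (one_pos.trans_le hx)
  have h_log_nonneg : 0 ≤ Real.logb 2 ‖x‖ := Real.logb_nonneg one_lt_two hx
  refine Or.inr (mem_iUnion.2 ⟨⌊Real.logb 2 ‖x‖⌋₊, ?_, ?_⟩)
  · conv_rhs => rw [← h_log]
    exact Real.rpow_le_rpow_of_exponent_le one_le_two (Nat.floor_le h_log_nonneg)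
  · conv_lhs => rw [← h_log]
    exact Real.rpow_le_rpow_of_exponent_le one_le_two (Nat.lt_floor_add_one _).le

lemma volume_annulus_le (k : ℕ) :
    volume (annulus k) ≤
      ENNReal.ofReal (2 ^ (3 * ((k : ℝ) + 1))) * volume (Metric.ball (0 : E3) 1) := by
  have h_sub : annulus k ⊆ Metric.closedBall 0 (2 ^ ((k : ℝ) + 1)) :=
    fun x hx => mem_closedBall_zero_iff.2 hx.2
  refine (measure_mono h_sub).trans_eq ?_
  rw [Measure.addHaar_closedBall _ _ (by positivity), finrank_euclideanSpace, Fintype.card_fin,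
    ← Real.rpow_natCast, ← Real.rpow_mul zero_le_two, Nat.cast_ofNat, mul_comm (3 : ℝ)]

lemma volume_annulus_rpow_le {b : ℝ} (hb : 0 ≤ b) (k : ℕ) :
    volume (annulus k) ^ b ≤ ENNReal.ofReal (2 ^ (3 * b * k)) *
      (ENNReal.ofReal (2 ^ (3 * b)) * volume (Metric.ball (0 : E3) 1) ^ b) := by
  refine (ENNReal.rpow_le_rpow (volume_annulus_le k) hb).trans_eq ?_
  rw [ENNReal.mul_rpow_of_nonneg _ _ hb, ← mul_assoc, ← ENNReal.ofReal_mul (by positivity),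
    ← Real.rpow_add two_pos, ENNReal.ofReal_rpow_of_pos (by positivity),
    ← Real.rpow_mul zero_le_two]
  ring_nf

theorem exists_lintegral_distribution_rpow_le_Bnorm {a : ℝ} (ha : 1 / 2 < a) (ha1 : a ≤ 1) :
    ∃ K : ℝ≥0∞, K ≠ ⊤ ∧ ∀ v : E3 → ℂ, Measurable v →
      ∫⁻ l in Ioi 0, distribution volume v (ENNReal.ofReal l) ^ a ≤
        K * Bnorm (3 * (a - 1 / 2)) v := by
  have hb : 0 ≤ a - 1 / 2 := by linarith
  set C := ENNReal.ofReal (1 + (a * 2 - 1)⁻¹)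
  set W := ENNReal.ofReal (2 ^ (3 * (a - 1 / 2))) * volume (Metric.ball (0 : E3) 1) ^ (a - 1 / 2)
  have h_piece {S : Set E3} (hS : MeasurableSet S) {v : E3 → ℂ} (hv : Measurable v) :
      ∫⁻ l in Ioi 0, distribution volume (S.indicator v) (ENNReal.ofReal l) ^ a ≤
        C * (volume S ^ (a - 1 / 2) * eLpNorm (S.indicator v) 2 volume) := by
    have := lintegral_distribution_rpow_le (μ := volume) two_ne_zero ENNReal.ofNat_ne_top
      (by rw [ENNReal.toReal_ofNat]; linarith) (hv.indicator hS).aestronglyMeasurable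
      (support_indicator_subset (s := S) (f := v))
    rwa [ENNReal.toReal_ofNat] at this
  have h_ball : volume (Metric.ball (0 : E3) 1) ^ (a - 1 / 2) ≤ W := by
    refine le_mul_of_one_le_left' (ENNReal.one_le_ofReal.2 (Real.one_le_rpow one_le_two ?_))
    positivity
  refine ⟨C * W, ENNReal.mul_ne_top ENNReal.ofReal_ne_top (ENNReal.mul_ne_top ENNReal.ofReal_ne_top
    (ENNReal.rpow_ne_top_of_nonneg hb measure_ball_lt_top.ne)), fun v hv => ?_⟩
  calc ∫⁻ l in Ioi 0, distribution volume v (ENNReal.ofReal l) ^ a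
      ≤ (∫⁻ l in Ioi 0,
            distribution volume ((Metric.ball (0 : E3) 1).indicator v) (ENNReal.ofReal l) ^ a) +
          ∑' k, ∫⁻ l in Ioi 0,
            distribution volume ((annulus k).indicator v) (ENNReal.ofReal l) ^ a :=
        lintegral_distribution_rpow_le_add_tsum (by linarith) ha1 ball_union_iUnion_annulus v
    _ ≤ C * (W * eLpNorm ((Metric.ball (0 : E3) 1).indicator v) 2 volume) +
          ∑' k : ℕ, C * (W * (ENNReal.ofReal (2 ^ (3 * (a - 1 / 2) * k)) *
            eLpNorm ((annulus k).indicator v) 2 volume)) := by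
        gcongr with k
        · exact (h_piece measurableSet_ball hv).trans (by gcongr)
        · refine (h_piece (measurableSet_annulus k) hv).trans ?_
          rw [← mul_assoc W, mul_comm W]
          gcongr
          exact volume_annulus_rpow_le hb k
    _ = C * W * Bnorm (3 * (a - 1 / 2)) v := by
        rw [ENNReal.tsum_mul_left, ENNReal.tsum_mul_left, ← mul_add, ← mul_add, ← mul_assoc]
        rfl

/-- Embedding `B^{3θ/2} ↪ L^{p,1}` with `p = 2/(1+θ)`, `0 < θ < 1`:
`‖v‖_{L^{p,1}} ≲ ‖v‖_{B^{3θ/2}}`. -/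
theorem Bspace_embeds_lorentz (θ : ℝ) (hθ0 : 0 < θ) (hθ1 : θ < 1) :
    ∃ C : ℝ, 0 < C ∧ ∀ v : E3 → ℂ, Measurable v →
      lorentzNorm volume (2 / (1 + θ)) 1 v ≤ ENNReal.ofReal C * Bnorm (3 * θ / 2) v := by
  obtain ⟨K, hK, h_bound⟩ :=
    exists_lintegral_distribution_rpow_le_Bnorm (a := (1 + θ) / 2) (by linarith) (by linarith)
  set p := 2 / (1 + θ)
  have hp : 0 < p := by positivity
  refine ⟨(ENNReal.ofReal p * K).toReal + 1, by positivity, fun v hv => ?_⟩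
  calc lorentzNorm volume p 1 v
      = ENNReal.ofReal p * ∫⁻ l in Ioi 0, distribution volume v (ENNReal.ofReal l) ^ (1 / p) :=
        lorentzNorm_one_eq_lintegral_distribution hp volume v
    _ ≤ ENNReal.ofReal p * K * Bnorm (3 * θ / 2) v := by
        rw [mul_assoc, one_div_div, show 3 * θ / 2 = 3 * ((1 + θ) / 2 - 1 / 2) by ring]
        gcongr
        exact h_bound v hv
    _ ≤ ENNReal.ofReal ((ENNReal.ofReal p * K).toReal + 1) * Bnorm (3 * θ / 2) v := by
        gcongr
        rw [ENNReal.le_ofReal_iff_toReal_le (ENNReal.mul_ne_top ENNReal.ofReal_ne_top hK)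
          (by positivity)]
        linarith

end
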